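/- arXiv:2401.12477 — 3 statements merged into one kernel-verified Lean document; each statement's English description precedes it below -/
import Mathlib

section
/- Let f : 𝔽₂ⁿ → 𝔽₂, f ≢ 0, have stratified representation f = M₁(M₂(⋯(M_{r-1}(M_r·p_C + 1) + 1)⋯) + 1) + q with layers M₁, …, M_r and core polynomial p_C, and suppose the variable x_j appears in layer M_i with factor (x_j + a_j). Then the restriction of f to x_j = a_j depends only on the variables appearing in the more dominant layers M₁, …, M_{i-1}: f|_{x_j = a_j}(x) = M₁(M₂(⋯(M_{i-1}·0 + 1)⋯) + 1) + q, so f|_{x_j=a_j} is independent of every variable of M_i ∖ {x_j}, of M_{i+1}, …, M_r, and of p_C. In particular, if i = 1 then f|_{x_j = a_j} is the constant q. -/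
/-- A Boolean function `f` is essential in (depends on) the variable `v` if flipping
the value of `v` can change the value of `f`. -/
def EssentialIn {V : Type*} [DecidableEq V] (f : (V → ZMod 2) → ZMod 2) (v : V) : Prop :=
  ∃ x, f x ≠ f (Function.update x v (x v + 1))

/-- A Boolean function is canalizing if some variable `v` has an input value `a` that
forces the output value `b`. -/
def IsCanalizing {V : Type*} (f : (V → ZMod 2) → ZMod 2) : Prop :=
  ∃ (v : V) (a b : ZMod 2), ∀ x, x v = a → f x = b

/-- The extended monomial on the variable set `S` with constants `a`,
`M(x) = ∏_{j ∈ S} (x_j + a_j)`. -/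
def extMonomial {V : Type*} (S : Finset V) (a : V → ZMod 2) (x : V → ZMod 2) : ZMod 2 :=
  ∏ j ∈ S, (x j + a j)

/-- The nested form `M₁(M₂(⋯(M_{r-1}(M_r·p + 1) + 1)⋯) + 1)` determined by a list of
layers (variable sets) `L`, constants `a`, and a core polynomial `p`. For `L = []` it
is just `p`. -/
def nestedLayers {V : Type*} (a : V → ZMod 2) (p : (V → ZMod 2) → ZMod 2) :
    List (Finset V) → (V → ZMod 2) → ZMod 2
  | [], x => p x
  | [S], x => extMonomial S a x * p x
  | S :: T :: Ss, x => extMonomial S a x * (nestedLayers a p (T :: Ss) x + 1)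

/-- `IsStratification f L a p q` says that
`f = M₁(M₂(⋯(M_{r-1}(M_r·p_C + 1) + 1)⋯) + 1) + q` is a representation of `f` as in
the He–Macauley stratification theorem: the layers `Mᵢ = ∏_{j ∈ Sᵢ} (x_j + a_j)` are
nonconstant extended monomials in pairwise disjoint variable sets, the core polynomial
`p` is independent of all layer variables and is identically `1` or non-canalizing,
and the exceptional-case conditions hold (if `p ≡ 1` and `r ≠ 1` then `k_r ≥ 2`; if
`p ≡ 1`, `r = 1`, `k₁ = 1` then `q = 0`; and for `r = 0` the representation is
`f = p_C`, i.e. `q = 0`). -/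
def IsStratification {V : Type*} [DecidableEq V] (f : (V → ZMod 2) → ZMod 2)
    (L : List (Finset V)) (a : V → ZMod 2) (p : (V → ZMod 2) → ZMod 2) (q : ZMod 2) :
    Prop :=
  (∀ S ∈ L, S.Nonempty) ∧
  L.Pairwise Disjoint ∧
  (∀ S ∈ L, ∀ v ∈ S, ¬ EssentialIn p v) ∧
  (p = (fun _ => 1) ∨ ¬ IsCanalizing p) ∧
  (p = (fun _ => 1) → L.length ≠ 1 → ∀ S ∈ L.getLast?, 2 ≤ S.card) ∧
  (p = (fun _ => 1) → ∀ S, L = [S] → S.card = 1 → q = 0) ∧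
  (L = [] → q = 0) ∧
  f = fun x => nestedLayers a p L x + q

/-!
Setting `x_j = a_j` kills the factor `x_j + a_j` of layer `i`, so the nested form collapses
at layer `i`: everything inside it, namely the rest of layer `i`, the less dominant layers
and the core, is multiplied by `0`. For `i > 0` the `+ 1` around that `0` then turns the
collapsed form into the nested form of the layers before `i` with core `1`, which involves
only the variables of those layers; these are disjoint from the later layers and from the
variables of the core.
-/

section NestedLayers

variable {V : Type*} (a : V → ZMod 2)

theorem nestedLayers_cons (p : (V → ZMod 2) → ZMod 2) (S : Finset V) {l : List (Finset V)}
    (hl : l ≠ []) (x : V → ZMod 2) :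
    nestedLayers a p (S :: l) x = extMonomial S a x * (nestedLayers a p l x + 1) := by
  cases l with
  | nil => exact absurd rfl hl
  | cons T Ss => rfl

theorem nestedLayers_cons_eq_zero (p : (V → ZMod 2) → ZMod 2) {S : Finset V}
    (l : List (Finset V)) {x : V → ZMod 2} (hS : extMonomial S a x = 0) :
    nestedLayers a p (S :: l) x = 0 := by
  cases l <;> simp [nestedLayers, hS]

theorem nestedLayers_eq_take_succ_of_extMonomial_eq_zero (p : (V → ZMod 2) → ZMod 2) :
    ∀ {l : List (Finset V)} {i : ℕ} (hi : i < l.length) {x : V → ZMod 2},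
      extMonomial l[i] a x = 0 →
      nestedLayers a p l x = nestedLayers a (fun _ => 0) (l.take (i + 1)) x
  | S :: rest, 0, _, x, hS => by
    simp only [List.take_succ_cons, List.take_zero, nestedLayers, mul_zero]
    exact nestedLayers_cons_eq_zero a p rest hS
  | S :: rest, k + 1, hk, x, hS => by
    have hk : k < rest.length := Nat.lt_of_succ_lt_succ hk
    rw [List.take_succ_cons, nestedLayers_cons a p S (List.ne_nil_of_length_pos (by omega)),
      nestedLayers_cons a _ S (List.ne_nil_of_length_pos (by simp; omega)),
      nestedLayers_eq_take_succ_of_extMonomial_eq_zero p hk hS]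

theorem nestedLayers_zero_append_singleton (S : Finset V) :
    ∀ {l : List (Finset V)}, l ≠ [] → ∀ x : V → ZMod 2,
      nestedLayers a (fun _ => 0) (l ++ [S]) x = nestedLayers a (fun _ => 1) l x
  | [T], _, x => by simp [nestedLayers]
  | T :: U :: Ss, _, x => by
    rw [List.cons_append, nestedLayers_cons a _ T (by simp), nestedLayers_cons a _ T (by simp),
      nestedLayers_zero_append_singleton S (by simp) x]

theorem nestedLayers_eq_take_of_extMonomial_eq_zero (p : (V → ZMod 2) → ZMod 2)
    {l : List (Finset V)} {i : ℕ} (hi : i < l.length) (hi0 : 0 < i) {x : V → ZMod 2}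
    (hx : extMonomial l[i] a x = 0) :
    nestedLayers a p l x = nestedLayers a (fun _ => 1) (l.take i) x := by
  rw [nestedLayers_eq_take_succ_of_extMonomial_eq_zero a p hi hx, ← List.take_append_getElem hi,
    nestedLayers_zero_append_singleton a _ (List.ne_nil_of_length_pos (by simp; omega))]

variable [DecidableEq V]

theorem extMonomial_update_self_of_mem {S : Finset V} {j : V} (hj : j ∈ S) (x : V → ZMod 2) :
    extMonomial S a (Function.update x j (a j)) = 0 :=
  Finset.prod_eq_zero hj (by simp [CharTwo.add_self_eq_zero])

theorem extMonomial_update_of_notMem {S : Finset V} {v : V} (hv : v ∉ S)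
    (x : V → ZMod 2) (c : ZMod 2) :
    extMonomial S a (Function.update x v c) = extMonomial S a x :=
  Finset.prod_congr rfl fun u hu => by rw [Function.update_of_ne (ne_of_mem_of_not_mem hu hv)]

theorem nestedLayers_update_of_notMem {p : (V → ZMod 2) → ZMod 2} {v : V}
    (hp : ∀ x c, p (Function.update x v c) = p x) :
    ∀ {l : List (Finset V)}, (∀ S ∈ l, v ∉ S) → ∀ (x : V → ZMod 2) (c : ZMod 2),
      nestedLayers a p l (Function.update x v c) = nestedLayers a p l x
  | [], _, x, c => hp x c
  | [S], hl, x, c => by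
    simp only [nestedLayers, extMonomial_update_of_notMem a (hl S (by simp)), hp]
  | S :: T :: Ss, hl, x, c => by
    simp only [nestedLayers, extMonomial_update_of_notMem a (hl S (by simp)),
      nestedLayers_update_of_notMem hp (fun U hU => hl U (List.mem_cons_of_mem S hU))]

end NestedLayers

theorem not_essentialIn_iff {V : Type*} [DecidableEq V] {f : (V → ZMod 2) → ZMod 2} {v : V} :
    ¬ EssentialIn f v ↔ ∀ x c, f (Function.update x v c) = f x := by
  refine ⟨fun h x c => ?_, fun h ⟨x, hx⟩ => hx (h x _).symm⟩
  simp only [EssentialIn, not_exists, not_not] at h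
  rcases (by decide : ∀ z w : ZMod 2, w = z ∨ w = z + 1) (x v) c with rfl | rfl
  · rw [Function.update_eq_self]
  · exact (h x).symm

theorem forall_notMem_take_of_mem_getElem {α : Type*} {L : List (Finset α)}
    (hL : L.Pairwise Disjoint) {i k : ℕ} (hk : k < L.length) (hik : i ≤ k) {v : α}
    (hv : v ∈ L[k]) : ∀ S ∈ L.take i, v ∉ S := by
  have hdisj := (List.pairwise_append.mp ((List.take_append_drop i L).symm ▸ hL)).2.2
  have hkdrop : L[k] ∈ L.drop i := List.mem_drop_iff_getElem.mpr ⟨k - i, by omega, by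
    simp only [Nat.add_sub_cancel' hik]⟩
  exact fun S hS hvS => Finset.disjoint_left.mp (hdisj S hS _ hkdrop) hvS hv

theorem stmt_9_general (n : ℕ) (f : (Fin n → ZMod 2) → ZMod 2)
    (L : List (Finset (Fin n))) (a : Fin n → ZMod 2)
    (p : (Fin n → ZMod 2) → ZMod 2) (q : ZMod 2)
    (h : IsStratification f L a p q)
    (i : ℕ) (hi : i < L.length) (j : Fin n) (hj : j ∈ L.get ⟨i, hi⟩) :
    -- the restriction equals the nested form of the layers up to `i`, with the
    -- innermost layer multiplied by the constant `0`
    (∀ x, f (Function.update x j (a j)) =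
      nestedLayers a (fun _ => 0) (L.take (i + 1)) (Function.update x j (a j)) + q) ∧
    -- the restriction is independent of `Mᵢ ∖ {x_j}`, of all less dominant layers,
    -- and of the core polynomial's variables
    (∀ v : Fin n,
      ((v ∈ L.get ⟨i, hi⟩ ∧ v ≠ j) ∨
        (∃ (i' : ℕ) (hi' : i' < L.length), i < i' ∧ v ∈ L.get ⟨i', hi'⟩) ∨
        EssentialIn p v) →
      ¬ EssentialIn (fun x => f (Function.update x j (a j))) v) ∧
    -- if `j` lies in the most dominant layer, the restriction is the constant `q`
    (i = 0 → (fun x => f (Function.update x j (a j))) = fun _ => q) := by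
  obtain ⟨-, hdisj, hind, -, -, -, -, rfl⟩ := h
  simp only [List.get_eq_getElem] at hj ⊢
  have hM := extMonomial_update_self_of_mem a hj
  have hconst : i = 0 → (fun x => nestedLayers a p L (Function.update x j (a j)) + q) =
      fun _ => q := by
    rintro rfl
    obtain ⟨S, l, rfl⟩ := List.exists_cons_of_length_pos hi
    simp only [List.getElem_cons_zero] at hM
    funext x
    rw [nestedLayers_cons_eq_zero a p l (hM x), zero_add]
  refine ⟨fun x => by rw [nestedLayers_eq_take_succ_of_extMonomial_eq_zero a p hi (hM x)],
    fun v hv => ?_, hconst⟩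
  have hvL : ∀ S ∈ L.take i, v ∉ S := by
    rcases hv with ⟨hv, -⟩ | ⟨k, hk, hik, hv⟩ | hvp
    · exact forall_notMem_take_of_mem_getElem hdisj hi le_rfl hv
    · exact forall_notMem_take_of_mem_getElem hdisj hk hik.le hv
    · exact fun S hS hvS => hind S (List.mem_of_mem_take hS) v hvS hvp
  rw [not_essentialIn_iff]
  intro x c
  rcases eq_or_ne v j with rfl | hvj
  · simp only [Function.update_idem]
  rcases Nat.eq_zero_or_pos i with hi0 | hi0
  · exact (congrFun (hconst hi0) _).trans (congrFun (hconst hi0) x).symm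
  rw [nestedLayers_eq_take_of_extMonomial_eq_zero a p hi hi0 (hM _),
    nestedLayers_eq_take_of_extMonomial_eq_zero a p hi hi0 (hM x), Function.update_comm hvj,
    nestedLayers_update_of_notMem a (fun _ _ => rfl) hvL]

/-- If the variable `j` appears in layer `Mᵢ` of the stratified
representation of `f` (with factor `(x_j + a_j)`), then the restriction of `f` to
`x_j = a_j` is the nested form of the more dominant layers only (with the `i`-th layer
annihilated), so it is independent of every other variable of `Mᵢ`, of all variables
of less dominant layers, and of all variables of the core polynomial `p_C`. In
particular, if `Mᵢ` is the most dominant layer, the restriction is the constant `q`.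
(Layers are indexed from `0` here, so layer `i` is the paper's `M_{i+1}`.) -/
theorem stmt_9 (n : ℕ) (f : (Fin n → ZMod 2) → ZMod 2) (hf : f ≠ fun _ => 0)
    (L : List (Finset (Fin n))) (a : Fin n → ZMod 2)
    (p : (Fin n → ZMod 2) → ZMod 2) (q : ZMod 2)
    (h : IsStratification f L a p q)
    (i : ℕ) (hi : i < L.length) (j : Fin n) (hj : j ∈ L.get ⟨i, hi⟩) :
    -- the restriction equals the nested form of the layers up to `i`, with the
    -- innermost layer multiplied by the constant `0`
    (∀ x, f (Function.update x j (a j)) =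
      nestedLayers a (fun _ => 0) (L.take (i + 1)) (Function.update x j (a j)) + q) ∧
    -- the restriction is independent of `Mᵢ ∖ {x_j}`, of all less dominant layers,
    -- and of the core polynomial's variables
    (∀ v : Fin n,
      ((v ∈ L.get ⟨i, hi⟩ ∧ v ≠ j) ∨
        (∃ (i' : ℕ) (hi' : i' < L.length), i < i' ∧ v ∈ L.get ⟨i', hi'⟩) ∨
        EssentialIn p v) →
      ¬ EssentialIn (fun x => f (Function.update x j (a j))) v) ∧
    -- if `j` lies in the most dominant layer, the restriction is the constant `q`
    (i = 0 → (fun x => f (Function.update x j (a j))) = fun _ => q) :=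
  stmt_9_general n f L a p q h i hi j hj
end

section
/- Let f : 𝔽₂ⁿ → 𝔽₂ be nonconstant with stratified representation f = M₁(M₂(⋯(M_{r-1}(M_r·p_C + 1) + 1)⋯) + 1) + q. Then a variable x_i is a canalizing variable of f (i.e., there exist a, b ∈ 𝔽₂ with f(x) = b for all x with x_i = a) if and only if r ≥ 1 and x_i appears in the first (most dominant) layer M₁. -/
section Helpers

variable {V : Type*} [DecidableEq V]

lemma zmod2_ne_iff {z w : ZMod 2} (h : z ≠ w) : z = w + 1 := by
  revert h; revert z w; decide

lemma zmod2_add_self (z : ZMod 2) : z + z = 0 := by revert z; decide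

lemma update_of_not_essential {g : (V → ZMod 2) → ZMod 2} {v : V}
    (h : ¬ EssentialIn g v) (x : V → ZMod 2) (c : ZMod 2) :
    g (Function.update x v c) = g x := by
  unfold EssentialIn at h
  push_neg at h
  by_cases hc : c = x v
  · rw [hc, Function.update_eq_self]
  · rw [zmod2_ne_iff hc]
    exact (h x).symm

lemma override_of_updates {g : (V → ZMod 2) → ZMod 2} :
    ∀ (S : Finset V), (∀ v ∈ S, ∀ x c, g (Function.update x v c) = g x) →
    ∀ (x z : V → ZMod 2), g (fun j => if j ∈ S then z j else x j) = g x := by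
  intro S
  induction S using Finset.induction_on with
  | empty => intro _ x z; simp
  | @insert v S hvS ih =>
    intro h x z
    have hkey : (fun j => if j ∈ insert v S then z j else x j)
        = Function.update (fun j => if j ∈ S then z j else x j) v (z v) := by
      funext j
      by_cases hj : j = v
      · subst hj; simp
      · simp [Function.update_apply, hj, Finset.mem_insert]
    rw [hkey, h v (Finset.mem_insert_self v S)]
    exact ih (fun w hw => h w (Finset.mem_insert_of_mem hw)) x z

lemma extMonomial_eq_zero {S : Finset V} {a x : V → ZMod 2} {j : V}
    (hj : j ∈ S) (h : x j = a j) : extMonomial S a x = 0 := by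
  apply Finset.prod_eq_zero hj
  rw [h]; exact zmod2_add_self (a j)

lemma extMonomial_eq_one {S : Finset V} {a x : V → ZMod 2}
    (h : ∀ j ∈ S, x j = a j + 1) : extMonomial S a x = 1 := by
  apply Finset.prod_eq_one
  intro j hj
  rw [h j hj]
  have : ∀ z : ZMod 2, z + 1 + z = 1 := by decide
  exact this (a j)

lemma nested_nil {a : V → ZMod 2} {p : (V → ZMod 2) → ZMod 2} {x} :
    nestedLayers a p [] x = p x := rfl

lemma nested_one {a : V → ZMod 2} {p : (V → ZMod 2) → ZMod 2} {S : Finset V} {x} :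
    nestedLayers a p [S] x = extMonomial S a x * p x := rfl

lemma nested_cons2 {a : V → ZMod 2} {p : (V → ZMod 2) → ZMod 2} {S T : Finset V}
    {Ss : List (Finset V)} {x} :
    nestedLayers a p (S :: T :: Ss) x
      = extMonomial S a x * (nestedLayers a p (T :: Ss) x + 1) := rfl

lemma nested_zero_of_mon {a : V → ZMod 2} {p : (V → ZMod 2) → ZMod 2} {S : Finset V}
    {L : List (Finset V)} {x} (h : extMonomial S a x = 0) :
    nestedLayers a p (S :: L) x = 0 := by
  cases L with
  | nil => rw [nested_one, h, zero_mul]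
  | cons T Ss => rw [nested_cons2, h, zero_mul]

lemma nested_update {a : V → ZMod 2} {p : (V → ZMod 2) → ZMod 2} {v : V}
    (hp : ¬ EssentialIn p v) :
    ∀ (L : List (Finset V)), (∀ S ∈ L, v ∉ S) →
    ∀ x c, nestedLayers a p L (Function.update x v c) = nestedLayers a p L x := by
  intro L
  induction L with
  | nil => intro _ x c; exact update_of_not_essential hp x c
  | cons S L ih =>
    intro hv x c
    have hS : v ∉ S := hv S (by simp)
    have hmon : extMonomial S a (Function.update x v c) = extMonomial S a x := by
      refine Finset.prod_congr rfl fun j hj => ?_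
      rw [Function.update_of_ne (fun h : j = v => hS (by rw [← h]; exact hj))]
    cases L with
    | nil => rw [nested_one, nested_one, hmon, update_of_not_essential hp]
    | cons T Ss =>
      rw [nested_cons2, nested_cons2, hmon,
        ih (fun U hU => hv U (List.mem_cons_of_mem _ hU)) x c]

lemma p_attains {p : (V → ZMod 2) → ZMod 2} (hp : ¬ IsCanalizing p)
    (v : V) (c b : ZMod 2) : ∃ x, x v = c ∧ p x = b + 1 := by
  unfold IsCanalizing at hp
  push_neg at hp
  obtain ⟨x, hx, hb⟩ := hp v c b
  exact ⟨x, hx, zmod2_ne_iff hb⟩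

/-- Lemma O: a nonempty nested form attains the value 1 somewhere. -/
lemma attains_one {a : V → ZMod 2} {p : (V → ZMod 2) → ZMod 2}
    (hp : p = (fun _ => 1) ∨ ¬ IsCanalizing p)
    (U : Finset V) (rest : List (Finset V))
    (hne : ∀ S ∈ U :: rest, S.Nonempty)
    (hdisj : (U :: rest).Pairwise Disjoint)
    (hess : ∀ S ∈ U :: rest, ∀ w ∈ S, ¬ EssentialIn p w) :
    ∃ x, nestedLayers a p (U :: rest) x = 1 := by
  cases rest with
  | nil =>
    rcases hp with hp1 | hpnc
    · refine ⟨fun j => a j + 1, ?_⟩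
      rw [nested_one, extMonomial_eq_one (fun j _ => rfl), hp1, one_mul]
    · obtain ⟨v0, hv0⟩ := (hne U (by simp))
      obtain ⟨x, -, hx1⟩ := p_attains hpnc v0 0 0
      refine ⟨fun j => if j ∈ U then a j + 1 else x j, ?_⟩
      have hpx : p (fun j => if j ∈ U then a j + 1 else x j) = p x :=
        override_of_updates U
          (fun w hw => update_of_not_essential (hess U (by simp) w hw)) x _
      rw [nested_one, extMonomial_eq_one (fun j hj => by simp [hj]), hpx, hx1, one_mul,
        zero_add]
  | cons T Ss =>
    obtain ⟨j, hj⟩ := hne T (by simp)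
    have hjU : j ∉ U := by
      have hd : Disjoint U T := (List.pairwise_cons.mp hdisj).1 T (by simp)
      exact fun hjU => (Finset.disjoint_left.mp hd hjU) hj
    refine ⟨fun i => if i ∈ U then a i + 1 else if i = j then a j else 0, ?_⟩
    have hmU : extMonomial U a (fun i => if i ∈ U then a i + 1 else if i = j then a j else 0) = 1 :=
      extMonomial_eq_one (fun i hi => by simp [hi])
    have hmT : nestedLayers a p (T :: Ss)
        (fun i => if i ∈ U then a i + 1 else if i = j then a j else 0) = 0 :=
      nested_zero_of_mon (extMonomial_eq_zero hj (by simp [hjU]))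
    rw [nested_cons2, hmU, hmT, one_mul, zero_add]

/-- Lemma Z: a nonempty nested form (with the last-layer condition when `p ≡ 1`)
attains the value 0 on any hyperplane `x v = c`. -/
lemma attains_zero_constrained {a : V → ZMod 2} {p : (V → ZMod 2) → ZMod 2}
    (hp : p = (fun _ => 1) ∨ ¬ IsCanalizing p)
    (T : Finset V) (rest : List (Finset V))
    (hne : ∀ S ∈ T :: rest, S.Nonempty)
    (hdisj : (T :: rest).Pairwise Disjoint)
    (hess : ∀ S ∈ T :: rest, ∀ w ∈ S, ¬ EssentialIn p w)
    (hlast : p = (fun _ => 1) → ∀ S ∈ (T :: rest).getLast?, 2 ≤ S.card)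
    (v : V) (c : ZMod 2) :
    ∃ x, x v = c ∧ nestedLayers a p (T :: rest) x = 0 := by
  by_cases h1 : ∃ j ∈ T, j ≠ v
  · obtain ⟨j, hjT, hjv⟩ := h1
    refine ⟨Function.update (fun i => if i = j then a j else 0) v c, Function.update_self _ _ _, ?_⟩
    apply nested_zero_of_mon
    apply extMonomial_eq_zero hjT
    rw [Function.update_of_ne hjv]
    simp
  · push_neg at h1
    have hvT : v ∈ T := by
      obtain ⟨j, hj⟩ := hne T (by simp)
      rwa [h1 j hj] at hj
    by_cases h2 : c = a v
    · refine ⟨fun i => if i = v then c else 0, by simp, ?_⟩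
      exact nested_zero_of_mon (extMonomial_eq_zero hvT (by simp [h2]))
    · cases rest with
      | nil =>
        rcases hp with hp1 | hpnc
        · exfalso
          have hcard := hlast hp1 T (by simp [List.getLast?])
          have hsub : T ⊆ {v} := fun j hj => by simp [h1 j hj]
          have := Finset.card_le_card hsub
          simp at this
          omega
        · obtain ⟨x, hxv, hx0⟩ := p_attains hpnc v c 1
          refine ⟨x, hxv, ?_⟩
          have : (1 : ZMod 2) + 1 = 0 := by decide
          rw [nested_one, hx0, this, mul_zero]
      | cons T' Ss =>
        obtain ⟨y, hy1⟩ := attains_one hp T' Ss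
          (fun S hS => hne S (List.mem_cons_of_mem _ hS))
          (List.pairwise_cons.mp hdisj).2
          (fun S hS => hess S (List.mem_cons_of_mem _ hS))
        have hessv : ¬ EssentialIn p v := hess T (by simp) v hvT
        have hvnot : ∀ S ∈ T' :: Ss, v ∉ S := by
          intro S hS hvS
          have hd : Disjoint T S := (List.pairwise_cons.mp hdisj).1 S hS
          exact (Finset.disjoint_left.mp hd hvT) hvS
        refine ⟨Function.update y v c, Function.update_self _ _ _, ?_⟩
        rw [nested_cons2, nested_update hessv _ hvnot, hy1]
        have : (1 : ZMod 2) + 1 = 0 := by decide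
        rw [this, mul_zero]

end Helpers

/-- **Remark 4.9(a).** For a nonconstant Boolean function `f` with
stratified representation `f = M₁(M₂(⋯) + 1) + q`, a variable is a canalizing variable
of `f` if and only if it appears in the first (most dominant) layer `M₁`. -/
theorem stmt_11 (n : ℕ) (f : (Fin n → ZMod 2) → ZMod 2)
    (hfc : ∀ c : ZMod 2, f ≠ fun _ => c)
    (L : List (Finset (Fin n))) (a : Fin n → ZMod 2)
    (p : (Fin n → ZMod 2) → ZMod 2) (q : ZMod 2)
    (h : IsStratification f L a p q) :
    ∀ v : Fin n,
      (∃ av bv : ZMod 2, ∀ x, x v = av → f x = bv) ↔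
      ∃ h0 : 0 < L.length, v ∈ L.get ⟨0, h0⟩ := by
  obtain ⟨hne, hdisj, hess, hp, hlast, hq1, hq0, hf⟩ := h
  intro v
  cases L with
  | nil =>
    constructor
    · rintro ⟨av, bv, hcan⟩
      exfalso
      have hq : q = 0 := hq0 rfl
      rcases hp with hp1 | hpnc
      · apply hfc 1
        rw [hf, hp1, hq]
        funext x
        simp [nested_nil]
      · obtain ⟨x, hxv, hxp⟩ := p_attains hpnc v av (bv + q)
        have hfx : f x = bv := hcan x hxv
        rw [hf] at hfx
        simp only [nested_nil] at hfx
        rw [hxp] at hfx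
        revert hfx
        have : ∀ b qq : ZMod 2, ¬ (b + qq + 1 + qq = b) := by decide
        exact this bv q
    · rintro ⟨h0, -⟩
      exact absurd h0 (by simp)
  | cons S₁ L' =>
    constructor
    · rintro ⟨av, bv, hcan⟩
      refine ⟨by simp, ?_⟩
      by_contra hv
      simp only [List.get] at hv
      -- Point with f = q on the hyperplane x v = av.
      obtain ⟨j, hjS⟩ := hne S₁ (by simp)
      have hjv : j ≠ v := fun h : j = v => hv (by rw [← h]; exact hjS)
      obtain ⟨x, hxv, hx0⟩ : ∃ x, x v = av ∧ nestedLayers a p (S₁ :: L') x = 0 := by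
        refine ⟨Function.update (fun i => if i = j then a j else 0) v av,
          Function.update_self _ _ _, ?_⟩
        apply nested_zero_of_mon
        apply extMonomial_eq_zero hjS
        rw [Function.update_of_ne hjv]
        simp
      -- Point with nested = 1 on the hyperplane x v = av.
      obtain ⟨y, hyv, hy1⟩ : ∃ y, y v = av ∧ nestedLayers a p (S₁ :: L') y = 1 := by
        cases L' with
        | nil =>
          rcases hp with hp1 | hpnc
          · refine ⟨Function.update (fun i => a i + 1) v av,
              Function.update_self _ _ _, ?_⟩
            rw [nested_one, hp1, extMonomial_eq_one ?_, one_mul]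
            intro i hi
            rw [Function.update_of_ne (fun h : i = v => hv (by rw [← h]; exact hi))]
          · obtain ⟨x₀, hx₀v, hx₀1⟩ := p_attains hpnc v av 0
            refine ⟨fun i => if i ∈ S₁ then a i + 1 else x₀ i, by simp [hv, hx₀v], ?_⟩
            have hpy : p (fun i => if i ∈ S₁ then a i + 1 else x₀ i) = p x₀ :=
              override_of_updates S₁
                (fun w hw => update_of_not_essential (hess S₁ (by simp) w hw)) x₀ _
            rw [nested_one, extMonomial_eq_one (fun i hi => by simp [hi]), hpy, hx₀1,
              one_mul, zero_add]
        | cons T Ss =>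
          have hlast' : p = (fun _ => 1) → ∀ S ∈ (T :: Ss).getLast?, 2 ≤ S.card := by
            intro hp1
            rw [← List.getLast?_cons_cons]
            exact hlast hp1 (by simp)
          obtain ⟨x₀, hx₀v, hx₀0⟩ := attains_zero_constrained hp T Ss
            (fun S hS => hne S (List.mem_cons_of_mem _ hS))
            (List.pairwise_cons.mp hdisj).2
            (fun S hS => hess S (List.mem_cons_of_mem _ hS)) hlast' v av
          refine ⟨fun i => if i ∈ S₁ then a i + 1 else x₀ i, by simp [hv, hx₀v], ?_⟩
          have hnested : nestedLayers a p (T :: Ss) (fun i => if i ∈ S₁ then a i + 1 else x₀ i)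
              = nestedLayers a p (T :: Ss) x₀ := by
            apply override_of_updates S₁
            intro w hw x c
            apply nested_update (hess S₁ (by simp) w hw)
            intro S hS hwS
            have hd : Disjoint S₁ S := (List.pairwise_cons.mp hdisj).1 S hS
            exact (Finset.disjoint_left.mp hd hw) hwS
          rw [nested_cons2, extMonomial_eq_one (fun i hi => by simp [hi]), hnested, hx₀0,
            one_mul, zero_add]
      have hfx : f x = bv := hcan x hxv
      have hfy : f y = bv := hcan y hyv
      rw [hf] at hfx hfy
      simp only [hx0, hy1] at hfx hfy
      rw [← hfy] at hfx
      revert hfx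
      have : ∀ qq : ZMod 2, ¬ (0 + qq = 1 + qq) := by decide
      exact this q
    · rintro ⟨h0, hv⟩
      simp only [List.get] at hv
      refine ⟨a v, q, fun x hx => ?_⟩
      have hz : nestedLayers a p (S₁ :: L') x = 0 :=
        nested_zero_of_mon (extMonomial_eq_zero hv (hx.trans rfl))
      rw [hf]
      show nestedLayers a p (S₁ :: L') x + q = q
      rw [hz, zero_add]
end

section
/- (Theorem 4.12, module exclusion via node control; path formulation.) Let F = (f₁, …, f_n) be a Boolean network on variable set V, let I ⊆ V (the variables of the excludable module), let x* ∈ V ∖ I, and let P ⊆ V ∖ I (the phenotype variables). Assume: (i) every directed path in the wiring diagram of F from a vertex of I to a vertex of P passes through x*; (ii) f_{x*} ≢ 0 has stratified representation with layers M₁, …, M_r, there is a variable y* ∉ I appearing in a layer M_j of f_{x*} with factor (y* + a), and j is strictly smaller than the index of every layer of f_{x*} containing a variable of I (I-variables of f_{x*} may also lie in the core polynomial); (iii) every directed path in the wiring diagram of F from a vertex of I to a variable appearing in one of the layers M₁, …, M_{j-1} of f_{x*} passes through x*. Let F^μ be the controlled network obtained from F by the node control fixing y*, i.e., replacing the update function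 of y* by the constant a. Then for any two initial states z, z' ∈ 𝔽₂^V that agree on all variables of V ∖ I and whose y*-coordinate equals a, the trajectories of F^μ from z and z' agree on x* and on every variable of P at all times t ≥ 0. In particular, the phenotype determined by P in F^μ is independent of the module I, so I can be excluded from the control search. -/
section BooleanFunction

variable {V : Type*} [DecidableEq V]

theorem apply_update_of_not_essentialIn {f : (V → ZMod 2) → ZMod 2} {u : V}
    (hf : ¬ EssentialIn f u) (x : V → ZMod 2) (b : ZMod 2) :
    f (Function.update x u b) = f x := by
  by_cases hb : b = x u
  · rw [hb, Function.update_eq_self]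
  · obtain rfl : b = x u + 1 := by
      generalize x u = c at hb
      revert b c
      decide
    by_contra hne
    exact hf ⟨x, Ne.symm hne⟩

/-- Finiteness matters: on infinitely many variables, a nonconstant function (such as "`x` is
eventually zero") can have no essential variable. -/
theorem apply_eq_of_forall_essentialIn [Fintype V] {f : (V → ZMod 2) → ZMod 2}
    {x x' : V → ZMod 2} (h : ∀ u, EssentialIn f u → x u = x' u) : f x = f x' := by
  suffices ∀ s : Finset V, f (s.piecewise x' x) = f x by
    simpa using (this Finset.univ).symm
  intro s
  induction s using Finset.induction_on with
  | empty => rw [Finset.piecewise_empty]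
  | insert u s hu ih =>
    rw [Finset.piecewise_insert, ← ih]
    by_cases hess : EssentialIn f u
    · rw [← h u hess, ← Finset.piecewise_eq_of_notMem s x' x hu, Function.update_eq_self]
    · exact apply_update_of_not_essentialIn hess _ _

end BooleanFunction

section Stratification

variable {V : Type*}

theorem extMonomial_congr (S : Finset V) (a : V → ZMod 2) {x x' : V → ZMod 2}
    (h : ∀ v ∈ S, x v = x' v) : extMonomial S a x = extMonomial S a x' :=
  Finset.prod_congr rfl fun v hv => by rw [h v hv]

theorem extMonomial_eq_zero_of_mem {S : Finset V} {a x : V → ZMod 2} {v : V} (hv : v ∈ S)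
    (hx : x v = a v) : extMonomial S a x = 0 :=
  Finset.prod_eq_zero hv (by rw [hx, CharTwo.add_self_eq_zero])

theorem nestedLayers_cons_of_extMonomial_eq_zero {a x : V → ZMod 2}
    {p : (V → ZMod 2) → ZMod 2} {S : Finset V} (Ss : List (Finset V))
    (hS : extMonomial S a x = 0) : nestedLayers a p (S :: Ss) x = 0 := by
  cases Ss <;> simp [nestedLayers, hS]

theorem nestedLayers_eq_of_extMonomial_eq_zero (a : V → ZMod 2) (p : (V → ZMod 2) → ZMod 2)
    {x x' : V → ZMod 2} :
    ∀ (L : List (Finset V)) (j : ℕ) (hj : j < L.length),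
      extMonomial L[j] a x = 0 → extMonomial L[j] a x' = 0 →
      (∀ (i : ℕ) (hi : i < L.length), i < j → ∀ v ∈ L[i], x v = x' v) →
      nestedLayers a p L x = nestedLayers a p L x'
  | S :: Ss, 0, _, hx, hx', _ => by
    rw [nestedLayers_cons_of_extMonomial_eq_zero Ss (by simpa using hx),
      nestedLayers_cons_of_extMonomial_eq_zero Ss (by simpa using hx')]
  | S :: T :: Ts, j + 1, hj, hx, hx', hagree => by
    have hS : extMonomial S a x = extMonomial S a x' :=
      extMonomial_congr S a (hagree 0 (by simp) (by omega))
    have hrest := nestedLayers_eq_of_extMonomial_eq_zero a p (T :: Ts) j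
      (by simpa using hj) hx hx' fun i hi hij => hagree (i + 1) (by simpa using hi) (by omega)
    simp only [nestedLayers, hS, hrest]

theorem IsStratification.apply_eq_of_mem_layer [DecidableEq V] {f : (V → ZMod 2) → ZMod 2}
    {L : List (Finset V)} {a : V → ZMod 2} {p : (V → ZMod 2) → ZMod 2} {q : ZMod 2}
    (h : IsStratification f L a p q) {j : ℕ} (hj : j < L.length) {y : V} (hy : y ∈ L[j])
    {x x' : V → ZMod 2} (hx : x y = a y) (hx' : x' y = a y)
    (hagree : ∀ (i : ℕ) (hi : i < L.length), i < j → ∀ v ∈ L[i], x v = x' v) :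
    f x = f x' := by
  rw [h.2.2.2.2.2.2.2]
  exact congrArg (· + q) (nestedLayers_eq_of_extMonomial_eq_zero a p L j hj
    (extMonomial_eq_zero_of_mem hy hx) (extMonomial_eq_zero_of_mem hy hx') hagree)

end Stratification

section Paths

variable {V : Type*} {E : V → V → Prop} {I : Set V} {w v : V}

def PassesThrough (E : V → V → Prop) (I : Set V) (w v : V) : Prop :=
  ∀ (l : List V) (hne : l ≠ []), l.IsChain E → l.head hne ∈ I → l.getLast hne = v → w ∈ l

theorem PassesThrough.refl : PassesThrough E I w w :=
  fun _ hne _ _ hlast => hlast ▸ List.getLast_mem hne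

theorem PassesThrough.notMem (h : PassesThrough E I w v) (hvw : v ≠ w) : v ∉ I :=
  fun hv => hvw (List.mem_singleton.mp (h [v] (by simp) (List.isChain_singleton v) hv rfl)).symm

theorem PassesThrough.of_edge (h : PassesThrough E I w v) (hvw : v ≠ w) {u : V} (huv : E u v) :
    PassesThrough E I w u := by
  intro l hne hchain hhead hlast
  have hne' : l ++ [v] ≠ [] := by simp
  have hchain' : (l ++ [v]).IsChain E := by
    refine List.isChain_append.mpr ⟨hchain, List.isChain_singleton v, ?_⟩
    simpa [List.getLast?_eq_some_getLast hne, hlast] using huv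
  have hmem := h (l ++ [v]) hne' hchain' (by rwa [List.head_append_left hne]) (by simp)
  simpa [Ne.symm hvw] using hmem

end Paths

theorem stmt_16_general (V : Type*) [DecidableEq V] [Fintype V]
    (F : (V → ZMod 2) → (V → ZMod 2))
    (I P : Set V) (xstar ystar : V)
    (hx : xstar ∉ I)
    -- the wiring diagram: `E u v` iff the update function of `v` depends on `u`
    (E : V → V → Prop)
    (hE : ∀ u v, E u v ↔ ∃ x, F x v ≠ F (Function.update x u (x u + 1)) v)
    -- (i) every path from `I` to `P` passes through `xstar`
    (hpathP : ∀ (l : List V) (hne : l ≠ []), l.Chain' E →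
      l.head hne ∈ I → l.getLast hne ∈ P → xstar ∈ l)
    -- (ii) canalizing structure of the update function of `xstar`
    (L : List (Finset V)) (a : V → ZMod 2)
    (p : (V → ZMod 2) → ZMod 2) (q : ZMod 2)
    (h : IsStratification (fun x => F x xstar) L a p q)
    (j : ℕ) (hj : j < L.length) (hyj : ystar ∈ L.get ⟨j, hj⟩)
    -- (iii) every path from `I` to a variable of a layer more dominant than `M_j`
    -- passes through `xstar`
    (hpathL : ∀ (l : List V) (hne : l ≠ []), l.Chain' E →
      l.head hne ∈ I →
      (∃ (i : ℕ) (hi : i < L.length), i < j ∧ l.getLast hne ∈ L.get ⟨i, hi⟩) →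
      xstar ∈ l)
    -- the controlled network: the node control fixing `ystar` to `a`
    (Fμ : (V → ZMod 2) → (V → ZMod 2))
    (hFμ : ∀ z v, Fμ z v = if v = ystar then a ystar else F z v) :
    ∀ z z' : V → ZMod 2,
      (∀ v, v ∉ I → z v = z' v) →
      z ystar = a ystar → z' ystar = a ystar →
      ∀ t : ℕ,
        (Fμ^[t] z) xstar = (Fμ^[t] z') xstar ∧
        ∀ v ∈ P, (Fμ^[t] z) v = (Fμ^[t] z') v := by
  intro z z' hzz hzy hz'y
  let Coupled (x x' : V → ZMod 2) : Prop :=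
    x ystar = a ystar ∧ x' ystar = a ystar ∧ ∀ v, PassesThrough E I xstar v → x v = x' v
  have hF : ∀ x x', Coupled x x' → ∀ v, PassesThrough E I xstar v → F x v = F x' v := by
    rintro x x' ⟨hy, hy', hagree⟩ v hv
    by_cases hvx : v = xstar
    · subst hvx
      exact h.apply_eq_of_mem_layer hj hyj hy hy' fun i hi hij u hu =>
        hagree u fun l hne hchain hhead hlast => hpathL l hne hchain hhead ⟨i, hi, hij, hlast ▸ hu⟩
    · exact apply_eq_of_forall_essentialIn fun u hu => hagree u (hv.of_edge hvx ((hE u v).2 hu))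
  have hstep : ∀ x x', Coupled x x' → Coupled (Fμ x) (Fμ x') := by
    intro x x' hxx
    refine ⟨by simp [hFμ], by simp [hFμ], fun v hv => ?_⟩
    rw [hFμ, hFμ]
    split_ifs
    exacts [rfl, hF x x' hxx v hv]
  have hcoupled : ∀ t, Coupled (Fμ^[t] z) (Fμ^[t] z') := by
    intro t
    induction t with
    | zero =>
      refine ⟨hzy, hz'y, fun v hv => hzz v ?_⟩
      by_cases hvx : v = xstar
      exacts [hvx ▸ hx, hv.notMem hvx]
    | succ t ih => simpa only [Function.iterate_succ_apply'] using hstep _ _ ih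
  exact fun t => ⟨(hcoupled t).2.2 xstar PassesThrough.refl, fun v hv => (hcoupled t).2.2 v
    fun l hne hchain hhead hlast => hpathP l hne hchain hhead (hlast ▸ hv)⟩

/-- **Theorem 4.12, module exclusion via node control; path
formulation.** Let `F` be a Boolean network on the variable set `V`, `I ⊆ V` the
variables of the excludable module, `xstar ∉ I`, and `P ⊆ V ∖ I` the phenotype
variables. Assume: (i) every directed path in the wiring diagram from `I` to `P`
passes through `xstar`; (ii) the update function of `xstar` has a stratified
representation with layers `L`, a variable `ystar ∉ I` appears in layer `M_j` (with
factor `(ystar + a)`), and `j` is strictly smaller than the index of every layer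
containing a variable of `I`; (iii) every directed path from `I` to a variable of one
of the layers `M₀, …, M_{j-1}` passes through `xstar`. Then after the node control
fixing `ystar` to its canalizing value `a`, any two initial states agreeing outside
`I` whose `ystar`-coordinate is `a` have trajectories agreeing on `xstar` and on every
phenotype variable at all times; so `I` can be excluded from the control search. -/
theorem stmt_16 (V : Type*) [DecidableEq V] [Fintype V]
    (F : (V → ZMod 2) → (V → ZMod 2))
    (I P : Set V) (xstar ystar : V)
    (hx : xstar ∉ I) (hPI : ∀ v ∈ P, v ∉ I) (hy : ystar ∉ I)
    -- the wiring diagram: `E u v` iff the update function of `v` depends on `u`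
    (E : V → V → Prop)
    (hE : ∀ u v, E u v ↔ ∃ x, F x v ≠ F (Function.update x u (x u + 1)) v)
    -- (i) every path from `I` to `P` passes through `xstar`
    (hpathP : ∀ (l : List V) (hne : l ≠ []), l.Chain' E →
      l.head hne ∈ I → l.getLast hne ∈ P → xstar ∈ l)
    -- (ii) canalizing structure of the update function of `xstar`
    (L : List (Finset V)) (a : V → ZMod 2)
    (p : (V → ZMod 2) → ZMod 2) (q : ZMod 2)
    (hf0 : (fun x => F x xstar) ≠ fun _ => 0)
    (h : IsStratification (fun x => F x xstar) L a p q)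
    (j : ℕ) (hj : j < L.length) (hyj : ystar ∈ L.get ⟨j, hj⟩)
    (hdom : ∀ (i : ℕ) (hi : i < L.length), ∀ v ∈ L.get ⟨i, hi⟩, v ∈ I → j < i)
    -- (iii) every path from `I` to a variable of a layer more dominant than `M_j`
    -- passes through `xstar`
    (hpathL : ∀ (l : List V) (hne : l ≠ []), l.Chain' E →
      l.head hne ∈ I →
      (∃ (i : ℕ) (hi : i < L.length), i < j ∧ l.getLast hne ∈ L.get ⟨i, hi⟩) →
      xstar ∈ l)
    -- the controlled network: the node control fixing `ystar` to `a`
    (Fμ : (V → ZMod 2) → (V → ZMod 2))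
    (hFμ : ∀ z v, Fμ z v = if v = ystar then a ystar else F z v) :
    ∀ z z' : V → ZMod 2,
      (∀ v, v ∉ I → z v = z' v) →
      z ystar = a ystar → z' ystar = a ystar →
      ∀ t : ℕ,
        (Fμ^[t] z) xstar = (Fμ^[t] z') xstar ∧
        ∀ v ∈ P, (Fμ^[t] z) v = (Fμ^[t] z') v :=
  stmt_16_general V F I P xstar ystar hx E hE hpathP L a p q h j hj hyj hpathL Fμ hFμ
end
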